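/- arXiv:2310.19793 — 5 statements merged into one kernel-verified Lean document; each statement's English description precedes it below -/
import Mathlib

section
/- Let p, q, r be positive integers, let M be a real r×p matrix and N a real p×q matrix with operator norms ‖M‖ ≤ 1 and ‖N‖ ≤ 1 (hence ‖MN‖ ≤ 1). Then: (i) for every square-integrable f : ℝ^q → ℝ, A_M(A_N f) = A_{MN} f holds γ_r-almost everywhere, and P_M(P_N f) = P_{MN} f holds pointwise; (ii) if V is a real r×q matrix with VᵀV = I_q, then for every f ∈ L²_{γ_q}, A_V f = P_V f γ_r-almost everywhere. -/
/-!
Write `A_M f (z) = 𝔼 f (Mᵀ z + D_M Y)` with `Y` standard Gaussian and the defect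
`D_M = (1 - MᵀM)^{1/2}`. The law of a linear image `C Y` of a standard Gaussian vector depends
only on `C Cᵀ`, as the characteristic functions show. Hence
`A_M (A_N f) (z) = 𝔼 f ((MN)ᵀ z + Nᵀ D_M Y + D_N W)` with `Y, W` independent, and
`Nᵀ D_M Y + D_N W` has covariance `Nᵀ (1 - MᵀM) N + 1 - NᵀN = D_{MN}²`, so it has the law of
`D_{MN} W`. Fubini applies for almost every `z` because `(MN)ᵀ Z + Nᵀ D_M Y + D_N W` is again
standard Gaussian. If `VᵀV = 1` then `D_V = 0` and `A_V = P_V`.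
-/

open MeasureTheory ProbabilityTheory Filter Matrix

noncomputable section

/-- Standard Gaussian measure on `ℝ^q`. -/
def stdGaussian (q : ℕ) : Measure (Fin q → ℝ) :=
  Measure.pi fun _ => gaussianReal 0 1

/-- Gaussian inner product `⟨f,g⟩_{γ_q}`. -/
def gInner (q : ℕ) (f g : (Fin q → ℝ) → ℝ) : ℝ :=
  ∫ x, f x * g x ∂(stdGaussian q)

open scoped Classical in
/-- The averaging operator `A_M` (defined when `I - MᵀM` is PSD, i.e. `‖M‖ ≤ 1`). -/
def avg {q r : ℕ} (M : Matrix (Fin q) (Fin r) ℝ) (f : (Fin r → ℝ) → ℝ) :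
    (Fin q → ℝ) → ℝ :=
  if h : (1 - Mᵀ * M).PosSemidef then
    fun z => ∫ y, f (Mᵀ *ᵥ z + (h.1.eigenvectorUnitary.1 * diagonal (fun i => Real.sqrt (h.1.eigenvalues i)) *
        (star h.1.eigenvectorUnitary : Matrix (Fin r) (Fin r) ℝ)) *ᵥ y) ∂(stdGaussian r)
  else 0

/-- The change of variables operator `P_M`. -/
def changeVar {q r : ℕ} (M : Matrix (Fin q) (Fin r) ℝ) (f : (Fin r → ℝ) → ℝ) :
    (Fin q → ℝ) → ℝ :=
  fun z => f (Mᵀ *ᵥ z)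

/-- Operator (`ℓ² → ℓ²`) norm of a matrix. -/
def matOpNorm {q r : ℕ} (M : Matrix (Fin q) (Fin r) ℝ) : ℝ :=
  ‖LinearMap.toContinuousLinearMap (Matrix.toEuclideanLin M)‖

open scoped MatrixOrder Matrix.Norms.L2Operator

theorem EuclideanSpace.norm_toLp_sq {n : Type*} [Fintype n] (x : n → ℝ) :
    ‖WithLp.toLp 2 x‖ ^ 2 = x ⬝ᵥ x := by
  rw [← real_inner_self_eq_norm_sq, EuclideanSpace.inner_eq_star_dotProduct, star_trivial]

section Defect

variable {m n l : Type*} [Fintype m] [Fintype n] [Fintype l] [DecidableEq n] [DecidableEq l]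

theorem posSemidef_one_sub_transpose_mul_self {M : Matrix m n ℝ} (hM : ‖M‖ ≤ 1) :
    (1 - Mᵀ * M).PosSemidef := by
  refine .of_dotProduct_mulVec_nonneg ?_ fun x => ?_
  · simpa [← conjTranspose_eq_transpose_of_trivial] using
      isHermitian_one.sub (isHermitian_conjTranspose_mul_self M)
  have hle : ‖WithLp.toLp 2 (M *ᵥ x)‖ ≤ ‖WithLp.toLp 2 x‖ :=
    (M.l2_opNorm_mulVec (WithLp.toLp 2 x)).trans (mul_le_of_le_one_left (norm_nonneg _) hM)
  have hsq := pow_le_pow_left₀ (norm_nonneg _) hle 2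
  rw [EuclideanSpace.norm_toLp_sq, EuclideanSpace.norm_toLp_sq] at hsq
  rw [star_trivial, sub_mulVec, one_mulVec, dotProduct_sub, ← mulVec_mulVec, dotProduct_mulVec,
    ← mulVec_transpose, transpose_transpose, sub_nonneg]
  exact hsq

theorem posSemidef_one_sub_transpose_mul_mul {M : Matrix m n ℝ} {N : Matrix n l ℝ}
    (hM : (1 - Mᵀ * M).PosSemidef) (hN : (1 - Nᵀ * N).PosSemidef) :
    (1 - (M * N)ᵀ * (M * N)).PosSemidef := by
  have h := (hM.conjTranspose_mul_mul_same N).add hN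
  rw [conjTranspose_eq_transpose_of_trivial] at h
  convert h using 1
  simp only [transpose_mul, Matrix.mul_sub, Matrix.sub_mul, Matrix.mul_one, Matrix.mul_assoc]
  abel

def defect (M : Matrix m n ℝ) : Matrix n n ℝ := CFC.sqrt (1 - Mᵀ * M)

theorem transpose_defect (M : Matrix m n ℝ) : (defect M)ᵀ = defect M := by
  have h := (CFC.sqrt_nonneg (1 - Mᵀ * M)).isSelfAdjoint
  rwa [IsSelfAdjoint, star_eq_conjTranspose, conjTranspose_eq_transpose_of_trivial] at h

theorem defect_mul_transpose {M : Matrix m n ℝ} (hM : (1 - Mᵀ * M).PosSemidef) :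
    defect M * (defect M)ᵀ = 1 - Mᵀ * M := by
  rw [transpose_defect, defect, CFC.sqrt_mul_sqrt_self _ hM.nonneg]

theorem transpose_mul_add_defect_mul {M : Matrix m n ℝ} (hM : (1 - Mᵀ * M).PosSemidef) :
    Mᵀ * Mᵀᵀ + defect M * (defect M)ᵀ = 1 := by
  rw [defect_mul_transpose hM, transpose_transpose, add_sub_cancel]

theorem defect_mul_transpose_mul {M : Matrix m n ℝ} {N : Matrix n l ℝ}
    (hM : (1 - Mᵀ * M).PosSemidef) (hN : (1 - Nᵀ * N).PosSemidef) :
    (Nᵀ * defect M) * (Nᵀ * defect M)ᵀ + defect N * (defect N)ᵀ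
      = defect (M * N) * (defect (M * N))ᵀ := by
  rw [defect_mul_transpose hN, defect_mul_transpose (posSemidef_one_sub_transpose_mul_mul hM hN),
    transpose_mul, transpose_transpose, Matrix.mul_assoc, ← Matrix.mul_assoc (defect M),
    defect_mul_transpose hM]
  simp only [transpose_mul, Matrix.mul_sub, Matrix.sub_mul, Matrix.one_mul, Matrix.mul_assoc]
  abel

theorem defect_eq_zero {M : Matrix m n ℝ} (hM : Mᵀ * M = 1) : defect M = 0 := by
  rw [defect, hM, sub_self, CFC.sqrt_zero]

end Defect

namespace MeasureTheory

namespace Measure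

variable {α β β' E : Type*} [MeasurableSpace α] [MeasurableSpace β] [MeasurableSpace β']
  [MeasurableSpace E] [Add E] [MeasurableAdd₂ E] {μ : Measure α} [SFinite μ] {g : α → E}

theorem map_prod_add_eq_map_prod_map (hg : Measurable g) (ν : Measure β) [SFinite ν]
    {φ : β → E} (hφ : Measurable φ) :
    (μ.prod ν).map (fun t => g t.1 + φ t.2) = (μ.prod (ν.map φ)).map (fun s => g s.1 + s.2) := by
  conv_rhs => rw [← map_id (μ := μ), map_prod_map _ _ measurable_id hφ,
    map_map (by fun_prop) (by fun_prop)]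
  rfl

theorem map_prod_add_congr (hg : Measurable g) {ν : Measure β} {ν' : Measure β'} [SFinite ν]
    [SFinite ν'] {φ : β → E} {ψ : β' → E} (hφ : Measurable φ) (hψ : Measurable ψ)
    (h : ν.map φ = ν'.map ψ) :
    (μ.prod ν).map (fun t => g t.1 + φ t.2) = (μ.prod ν').map (fun t => g t.1 + ψ t.2) := by
  rw [map_prod_add_eq_map_prod_map hg ν hφ, map_prod_add_eq_map_prod_map hg ν' hψ, h]

end Measure

theorem integral_comp_eq_of_map_eq {α β E G : Type*} [MeasurableSpace α] [MeasurableSpace β]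
    [MeasurableSpace E] [NormedAddCommGroup G] [NormedSpace ℝ G] {μ : Measure α} {ν : Measure β}
    {φ : α → E} {ψ : β → E} (hφ : Measurable φ) (hψ : Measurable ψ) (h : μ.map φ = ν.map ψ)
    {g : E → G} (hg : StronglyMeasurable g) :
    ∫ x, g (φ x) ∂μ = ∫ y, g (ψ y) ∂ν := by
  rw [← integral_map hφ.aemeasurable hg.aestronglyMeasurable, h,
    integral_map hψ.aemeasurable hg.aestronglyMeasurable]

end MeasureTheory

abbrev stdGaussianPi (ι : Type*) [Fintype ι] : Measure (ι → ℝ) :=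
  Measure.pi fun _ => gaussianReal 0 1

instance (n : ℕ) : IsProbabilityMeasure (stdGaussian n) :=
  inferInstanceAs (IsProbabilityMeasure (stdGaussianPi (Fin n)))

section StdGaussianPi

variable {ι ι' ι'' κ : Type*} [Fintype ι] [Fintype ι'] [Fintype ι''] [Fintype κ]

theorem charFun_map_mulVec_stdGaussianPi (C : Matrix κ ι ℝ) (t : EuclideanSpace ℝ κ) :
    charFun ((stdGaussianPi ι).map fun x => WithLp.toLp 2 (C *ᵥ x)) t
      = Complex.exp (-(t.ofLp ⬝ᵥ (C * Cᵀ) *ᵥ t.ofLp) / 2 : ℝ) := by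
  have hinner (x : ι → ℝ) : inner ℝ (WithLp.toLp 2 (C *ᵥ x)) t
      = inner ℝ (WithLp.toLp 2 x) (WithLp.toLp 2 (Cᵀ *ᵥ t.ofLp)) := by
    simp only [EuclideanSpace.inner_eq_star_dotProduct, star_trivial]
    rw [dotProduct_mulVec, mulVec_transpose]
  have hnorm : ‖WithLp.toLp 2 (Cᵀ *ᵥ t.ofLp)‖ ^ 2 = t.ofLp ⬝ᵥ (C * Cᵀ) *ᵥ t.ofLp := by
    rw [EuclideanSpace.norm_toLp_sq, ← mulVec_mulVec, dotProduct_mulVec t.ofLp C,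
      mulVec_transpose]
  calc charFun ((stdGaussianPi ι).map fun x => WithLp.toLp 2 (C *ᵥ x)) t
      = charFun ((stdGaussianPi ι).map (WithLp.toLp 2)) (WithLp.toLp 2 (Cᵀ *ᵥ t.ofLp)) := by
        simp_rw [charFun_apply]
        rw [integral_map (by fun_prop) (by fun_prop), integral_map (by fun_prop) (by fun_prop)]
        simp_rw [hinner]
    _ = _ := by
        rw [map_pi_eq_stdGaussian, charFun_stdGaussian, ← Complex.ofReal_pow, hnorm]
        congr 1
        push_cast
        ring

theorem map_mulVec_stdGaussianPi_eq (C : Matrix κ ι ℝ) (C' : Matrix κ ι' ℝ)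
    (h : C * Cᵀ = C' * C'ᵀ) :
    (stdGaussianPi ι).map (C *ᵥ ·) = (stdGaussianPi ι').map (C' *ᵥ ·) := by
  have hLp : (stdGaussianPi ι).map (fun x => WithLp.toLp 2 (C *ᵥ x))
      = (stdGaussianPi ι').map (fun x => WithLp.toLp 2 (C' *ᵥ x)) :=
    Measure.ext_of_charFun <| funext fun t => by
      rw [charFun_map_mulVec_stdGaussianPi, charFun_map_mulVec_stdGaussianPi, h]
  have h' := congrArg (Measure.map WithLp.ofLp) hLp
  rwa [Measure.map_map (by fun_prop) (by fun_prop),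
    Measure.map_map (by fun_prop) (by fun_prop)] at h'

theorem map_mulVec_add_mulVec_stdGaussianPi (B : Matrix κ ι ℝ) (C : Matrix κ ι' ℝ) :
    ((stdGaussianPi ι).prod (stdGaussianPi ι')).map (fun v => B *ᵥ v.1 + C *ᵥ v.2)
      = (stdGaussianPi (ι ⊕ ι')).map (fromCols B C *ᵥ ·) := by
  rw [← (measurePreserving_sumPiEquivProdPi fun _ : ι ⊕ ι' => gaussianReal 0 1).map_eq,
    Measure.map_map (by fun_prop) (by fun_prop)]
  congr 1
  ext x : 1
  exact (fromCols_mulVec B C x).symm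

theorem map_mulVec_add_mulVec_stdGaussianPi_eq (B : Matrix κ ι ℝ) (C : Matrix κ ι' ℝ)
    (D : Matrix κ ι'' ℝ) (h : B * Bᵀ + C * Cᵀ = D * Dᵀ) :
    ((stdGaussianPi ι).prod (stdGaussianPi ι')).map (fun v => B *ᵥ v.1 + C *ᵥ v.2)
      = (stdGaussianPi ι'').map (D *ᵥ ·) := by
  rw [map_mulVec_add_mulVec_stdGaussianPi, map_mulVec_stdGaussianPi_eq _ D]
  rwa [transpose_fromCols, fromCols_mul_fromRows]

theorem measurePreserving_mulVec_add_mulVec [DecidableEq κ] (B : Matrix κ ι ℝ)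
    (C : Matrix κ ι' ℝ) (h : B * Bᵀ + C * Cᵀ = 1) :
    MeasurePreserving (fun v => B *ᵥ v.1 + C *ᵥ v.2)
      ((stdGaussianPi ι).prod (stdGaussianPi ι')) (stdGaussianPi κ) where
  measurable := by fun_prop
  map_eq := by
    rw [map_mulVec_add_mulVec_stdGaussianPi_eq B C 1 (by rwa [transpose_one, mul_one])]
    simp only [one_mulVec, Measure.map_id']

end StdGaussianPi

section Averaging

variable {p q r : ℕ}

theorem avg_apply {M : Matrix (Fin q) (Fin r) ℝ} (hM : (1 - Mᵀ * M).PosSemidef)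
    (f : (Fin r → ℝ) → ℝ) (z : Fin q → ℝ) :
    avg M f z = ∫ y, f (Mᵀ *ᵥ z + defect M *ᵥ y) ∂stdGaussianPi (Fin r) := by
  rw [avg, dif_pos hM, defect, CFC.sqrt_eq_real_sqrt _ hM.nonneg, cfcₙ_eq_cfc, hM.1.cfc_eq]
  rfl

theorem avg_eq_changeVar {V : Matrix (Fin r) (Fin q) ℝ} (hV : Vᵀ * V = 1)
    (f : (Fin q → ℝ) → ℝ) : avg V f = changeVar V f := by
  have hV' : (1 - Vᵀ * V).PosSemidef := by
    rw [hV, sub_self]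
    exact .zero
  funext z
  simp [avg_apply hV', defect_eq_zero hV, changeVar]

theorem measurePreserving_avg_integrand {M : Matrix (Fin q) (Fin r) ℝ}
    (hM : (1 - Mᵀ * M).PosSemidef) :
    MeasurePreserving (fun t => Mᵀ *ᵥ t.1 + defect M *ᵥ t.2)
      ((stdGaussianPi (Fin q)).prod (stdGaussianPi (Fin r))) (stdGaussianPi (Fin r)) :=
  measurePreserving_mulVec_add_mulVec _ _ (transpose_mul_add_defect_mul hM)

theorem avg_ae_congr {M : Matrix (Fin q) (Fin r) ℝ} (hM : (1 - Mᵀ * M).PosSemidef)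
    {f g : (Fin r → ℝ) → ℝ} (hfg : f =ᵐ[stdGaussian r] g) :
    avg M f =ᵐ[stdGaussian q] avg M g := by
  have h := Measure.ae_ae_of_ae_prod
    ((measurePreserving_avg_integrand hM).quasiMeasurePreserving.ae_eq_comp hfg)
  filter_upwards [h] with z hz
  rw [avg_apply hM, avg_apply hM]
  exact integral_congr_ae hz

variable {M : Matrix (Fin r) (Fin p) ℝ} {N : Matrix (Fin p) (Fin q) ℝ}

theorem avg_avg_apply_of_integrable (hM : (1 - Mᵀ * M).PosSemidef)
    (hN : (1 - Nᵀ * N).PosSemidef) {f : (Fin q → ℝ) → ℝ} (hf : StronglyMeasurable f)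
    {z : Fin r → ℝ}
    (hz : Integrable (fun v => f ((M * N)ᵀ *ᵥ z + ((Nᵀ * defect M) *ᵥ v.1 + defect N *ᵥ v.2)))
      ((stdGaussianPi (Fin p)).prod (stdGaussianPi (Fin q)))) :
    avg M (avg N f) z = avg (M * N) f z := by
  have harg (y : Fin p → ℝ) (w : Fin q → ℝ) :
      Nᵀ *ᵥ (Mᵀ *ᵥ z + defect M *ᵥ y) + defect N *ᵥ w
        = (M * N)ᵀ *ᵥ z + ((Nᵀ * defect M) *ᵥ y + defect N *ᵥ w) := by
    rw [mulVec_add, mulVec_mulVec, mulVec_mulVec, transpose_mul, add_assoc]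
  simp_rw [avg_apply hM, avg_apply hN, avg_apply (posSemidef_one_sub_transpose_mul_mul hM hN),
    harg]
  refine (integral_integral hz).trans ?_
  exact integral_comp_eq_of_map_eq (by fun_prop) (by fun_prop)
    (map_mulVec_add_mulVec_stdGaussianPi_eq _ _ _ (defect_mul_transpose_mul hM hN))
    (hf.comp_measurable (measurable_const_add _))

theorem ae_integrable_avg_avg_integrand (hM : (1 - Mᵀ * M).PosSemidef)
    (hN : (1 - Nᵀ * N).PosSemidef) {f : (Fin q → ℝ) → ℝ} (hf : Integrable f (stdGaussian q)) :
    ∀ᵐ z ∂stdGaussian r,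
      Integrable (fun v => f ((M * N)ᵀ *ᵥ z + ((Nᵀ * defect M) *ᵥ v.1 + defect N *ᵥ v.2)))
        ((stdGaussianPi (Fin p)).prod (stdGaussianPi (Fin q))) := by
  have hT : MeasurePreserving
      (fun t : (Fin r → ℝ) × (Fin p → ℝ) × (Fin q → ℝ) =>
        (M * N)ᵀ *ᵥ t.1 + ((Nᵀ * defect M) *ᵥ t.2.1 + defect N *ᵥ t.2.2))
      ((stdGaussianPi (Fin r)).prod ((stdGaussianPi (Fin p)).prod (stdGaussianPi (Fin q))))
      (stdGaussianPi (Fin q)) := by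
    refine ⟨by fun_prop, ?_⟩
    rw [Measure.map_prod_add_congr (by fun_prop) (by fun_prop) (by fun_prop)
      (map_mulVec_add_mulVec_stdGaussianPi_eq _ _ _ (defect_mul_transpose_mul hM hN))]
    exact (measurePreserving_avg_integrand (posSemidef_one_sub_transpose_mul_mul hM hN)).map_eq
  exact ((hT.integrable_comp hf.1).mpr hf).prod_right_ae

theorem avg_avg_ae_eq (hM : (1 - Mᵀ * M).PosSemidef) (hN : (1 - Nᵀ * N).PosSemidef)
    {f : (Fin q → ℝ) → ℝ} (hf : Integrable f (stdGaussian q)) :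
    avg M (avg N f) =ᵐ[stdGaussian r] avg (M * N) f := by
  -- At a fixed `z` the law of `Nᵀ D_M Y + D_N W` may be singular, so an a.e. defined `f` is not
  -- enough there: pass to a strongly measurable representative.
  have hff := hf.1.ae_eq_mk
  have h : avg M (avg N (hf.1.mk f)) =ᵐ[stdGaussian r] avg (M * N) (hf.1.mk f) :=
    (ae_integrable_avg_avg_integrand hM hN (hf.congr hff)).mono fun z hz =>
      avg_avg_apply_of_integrable hM hN hf.1.stronglyMeasurable_mk hz
  exact (avg_ae_congr hM (avg_ae_congr hN hff)).trans
    (h.trans (avg_ae_congr (posSemidef_one_sub_transpose_mul_mul hM hN) hff.symm))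

end Averaging

theorem changeVar_changeVar {p q r : ℕ} (M : Matrix (Fin r) (Fin p) ℝ)
    (N : Matrix (Fin p) (Fin q) ℝ) (f : (Fin q → ℝ) → ℝ) :
    changeVar M (changeVar N f) = changeVar (M * N) f := by
  funext z
  simp only [changeVar, mulVec_mulVec, transpose_mul]

theorem averaging_multiplicative_general {p q r : ℕ}
    (M : Matrix (Fin r) (Fin p) ℝ) (N : Matrix (Fin p) (Fin q) ℝ)
    (hM : matOpNorm M ≤ 1) (hN : matOpNorm N ≤ 1)
    (V : Matrix (Fin r) (Fin q) ℝ) (hV : Vᵀ * V = 1) :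
    (∀ f : (Fin q → ℝ) → ℝ, MemLp f 2 (stdGaussian q) →
      (avg M (avg N f) =ᵐ[stdGaussian r] avg (M * N) f) ∧
      changeVar M (changeVar N f) = changeVar (M * N) f) ∧
    (∀ f : (Fin q → ℝ) → ℝ, MemLp f 2 (stdGaussian q) →
      avg V f =ᵐ[stdGaussian r] changeVar V f) :=
  ⟨fun f hf => ⟨avg_avg_ae_eq (posSemidef_one_sub_transpose_mul_self hM)
      (posSemidef_one_sub_transpose_mul_self hN) (hf.integrable one_le_two),
      changeVar_changeVar M N f⟩,
    fun f _ => .of_eq (avg_eq_changeVar hV f)⟩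

/-- Lemma 2.6 (multiplicative properties of the averaging and change-of-variables
operators). -/
theorem averaging_multiplicative {p q r : ℕ} (hp : 0 < p) (hq : 0 < q) (hr : 0 < r)
    (M : Matrix (Fin r) (Fin p) ℝ) (N : Matrix (Fin p) (Fin q) ℝ)
    (hM : matOpNorm M ≤ 1) (hN : matOpNorm N ≤ 1)
    (V : Matrix (Fin r) (Fin q) ℝ) (hV : Vᵀ * V = 1) :
    (∀ f : (Fin q → ℝ) → ℝ, MemLp f 2 (stdGaussian q) →
      (avg M (avg N f) =ᵐ[stdGaussian r] avg (M * N) f) ∧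
      changeVar M (changeVar N f) = changeVar (M * N) f) ∧
    (∀ f : (Fin q → ℝ) → ℝ, MemLp f 2 (stdGaussian q) →
      avg V f =ᵐ[stdGaussian r] changeVar V f) :=
  averaging_multiplicative_general M N hM hN V hV

end
end

section
/- Let d be a positive integer and F : ℝ^d → ℝ a continuously differentiable function such that F and all its first-order partial derivatives belong to L²_{γ_d}. Define the gradient Gram matrix G_F := ∫_{ℝ^d} ∇F(x) ∇F(x)ᵀ dγ_d(x) ∈ ℝ^{d×d}. Then: (i) the intrinsic dimension of F equals the rank of G_F, i.e. d(F) = rank(G_F); (ii) if P is the orthogonal projection matrix onto the column space of G_F, then A_P F = F in L²_{γ_d}; (iii) every W ∈ S(d, d(F)) with Π_W F = F has column span equal to the column space of G_F. -/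
open MeasureTheory ProbabilityTheory Filter Matrix

noncomputable section

/-- Intrinsic dimension of `F ∈ L²_{γ_q}`: smallest `p` such that `F` factors through
an orthogonal projection onto a `p`-dimensional subspace (as L² functions). -/
def intrinsicDim {q : ℕ} (F : (Fin q → ℝ) → ℝ) : ℕ :=
  sInf { p : ℕ | ∃ W : Matrix (Fin q) (Fin p) ℝ, Wᵀ * W = 1 ∧
    avg (W * Wᵀ) F =ᵐ[stdGaussian q] F }

/-- The gradient Gram matrix `G_F = ∫ ∇F ∇Fᵀ dγ_d`. -/
def gradGram {d : ℕ} (F : (Fin d → ℝ) → ℝ) : Matrix (Fin d) (Fin d) ℝ :=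
  Matrix.of fun i j =>
    ∫ x, fderiv ℝ F x (Pi.single i 1) * fderiv ℝ F x (Pi.single j 1) ∂(stdGaussian d)
/-! For an orthogonal projection `P` one has `A_P F z = ∫ F (P z + (1 - P) y) dγ_d(y)`, so
`A_P F` is invariant under translations along `ker P`. Since translations are quasi-invariant
for `γ_d` and `F` is continuous, `A_P F = F` a.e. holds iff `F` itself is invariant along
`ker P`, i.e. iff `∂_v F ≡ 0` for all `v ∈ ker P`. The identity `vᵀ G_F v = ∫ (∂_v F)² dγ_d`
identifies `{v | ∂_v F ≡ 0}` with `ker G_F`, and for the positive semidefinite `G_F` the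
inclusion `ker P ≤ ker G_F` is equivalent to `range G_F ≤ range P`. Comparing dimensions, a
Stiefel frame spanning `range G_F` realises the minimum in the definition of `d(F)`, and every
optimal frame spans exactly `range G_F`. -/

theorem MeasureTheory.Measure.absolutelyContinuous_pi {n : ℕ} {α : Fin n → Type*}
    [∀ i, MeasurableSpace (α i)] {μ ν : ∀ i, Measure (α i)} [∀ i, SigmaFinite (μ i)]
    [∀ i, SigmaFinite (ν i)] (h : ∀ i, μ i ≪ ν i) : Measure.pi μ ≪ Measure.pi ν := by
  induction n with
  | zero => rw [Measure.pi_of_empty μ, Measure.pi_of_empty ν]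
  | succ n ih =>
    rw [← (measurePreserving_piFinSuccAbove μ 0).symm.map_eq,
      ← (measurePreserving_piFinSuccAbove ν 0).symm.map_eq]
    exact ((h 0).prod (ih fun i => h _)).map (MeasurableEquiv.measurable _)

instance (q : ℕ) : IsProbabilityMeasure (stdGaussian q) := by
  unfold _root_.stdGaussian; infer_instance

theorem stdGaussian_absolutelyContinuous_volume (q : ℕ) : stdGaussian q ≪ volume :=
  Measure.absolutelyContinuous_pi fun _ => gaussianReal_absolutelyContinuous 0 one_ne_zero

theorem volume_absolutelyContinuous_stdGaussian (q : ℕ) : volume ≪ stdGaussian q :=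
  Measure.absolutelyContinuous_pi fun _ => gaussianReal_absolutelyContinuous' 0 one_ne_zero

instance (q : ℕ) : (stdGaussian q).IsOpenPosMeasure :=
  (volume_absolutelyContinuous_stdGaussian q).isOpenPosMeasure

theorem quasiMeasurePreserving_add_right_stdGaussian (q : ℕ) (c : Fin q → ℝ) :
    Measure.QuasiMeasurePreserving (· + c) (stdGaussian q) (stdGaussian q) := by
  refine ⟨measurable_add_const c, Measure.AbsolutelyContinuous.trans ?_
    (volume_absolutelyContinuous_stdGaussian q)⟩
  calc (stdGaussian q).map (· + c) ≪ (volume : Measure (Fin q → ℝ)).map (· + c) :=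
        (stdGaussian_absolutelyContinuous_volume q).map (measurable_add_const c)
    _ = volume := map_add_right_eq_self _ c

theorem IsStarProjection.cfc_sqrt {A : Type*} [Ring A] [StarRing A] [Algebra ℝ A]
    [TopologicalSpace A] [ContinuousFunctionalCalculus ℝ A IsSelfAdjoint] {p : A}
    (hp : IsStarProjection p) : cfc Real.sqrt p = p := by
  calc cfc Real.sqrt p = cfc id p := cfc_congr fun x hx => by
        rcases hp.isIdempotentElem.spectrum_subset ℝ hx with rfl | rfl <;> simp
    _ = p := cfc_id ℝ p hp.isSelfAdjoint

namespace Matrix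

variable {n : Type*} [Fintype n]

theorem isStarProjection_iff_transpose {P : Matrix n n ℝ} :
    IsStarProjection P ↔ Pᵀ = P ∧ P * P = P :=
  ⟨fun h => ⟨h.isSelfAdjoint, h.isIdempotentElem⟩, fun h => ⟨h.2, h.1⟩⟩

theorem dotProduct_mulVec_of_transpose_eq {A : Matrix n n ℝ} (hA : Aᵀ = A) (v w : n → ℝ) :
    v ⬝ᵥ (A *ᵥ w) = (A *ᵥ v) ⬝ᵥ w := by
  rw [dotProduct_mulVec, ← vecMul_transpose, hA]

theorem ker_mulVecLin_le_iff_range_le {P G : Matrix n n ℝ} (hP : IsStarProjection P)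
    (hG : G.PosSemidef) :
    LinearMap.ker P.mulVecLin ≤ LinearMap.ker G.mulVecLin ↔
      LinearMap.range G.mulVecLin ≤ LinearMap.range P.mulVecLin := by
  have hPT : Pᵀ = P := (isStarProjection_iff_transpose.1 hP).1
  have hGT : Gᵀ = G := hG.1
  constructor
  · rintro hker _ ⟨u, rfl⟩
    set g := G *ᵥ u
    set w := g - P *ᵥ g
    have hPw : P *ᵥ w = 0 := by
      rw [mulVec_sub, mulVec_mulVec g, hP.isIdempotentElem.eq, sub_self]
    have hGw : G *ᵥ w = 0 := hker hPw
    have hw : w = 0 := by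
      rw [← dotProduct_self_eq_zero]
      calc w ⬝ᵥ w = w ⬝ᵥ (G *ᵥ u) - w ⬝ᵥ (P *ᵥ g) := dotProduct_sub _ _ _
        _ = 0 := by
          rw [dotProduct_mulVec_of_transpose_eq hGT, dotProduct_mulVec_of_transpose_eq hPT, hGw,
            hPw, zero_dotProduct, zero_dotProduct, sub_zero]
    exact ⟨g, (sub_eq_zero.1 hw).symm⟩
  · intro hrange v hv
    obtain ⟨u, hu : P *ᵥ u = G *ᵥ v⟩ := hrange ⟨v, rfl⟩
    have hPv : P *ᵥ v = 0 := hv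
    rw [LinearMap.mem_ker, mulVecLin_apply, ← hG.dotProduct_mulVec_zero_iff, star_trivial,
      ← hu, dotProduct_mulVec_of_transpose_eq hPT, hPv, zero_dotProduct]

variable {p : ℕ} {W : Matrix n (Fin p) ℝ}

theorem isStarProjection_mul_transpose (hW : Wᵀ * W = 1) : IsStarProjection (W * Wᵀ) :=
  isStarProjection_iff_transpose.2
    ⟨by rw [transpose_mul, transpose_transpose],
      by rw [Matrix.mul_assoc, ← Matrix.mul_assoc Wᵀ, hW, Matrix.one_mul]⟩

theorem range_mulVecLin_mul_transpose (hW : Wᵀ * W = 1) :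
    LinearMap.range (W * Wᵀ).mulVecLin = LinearMap.range W.mulVecLin := by
  rw [mulVecLin_mul, LinearMap.range_comp_of_range_eq_top]
  exact LinearMap.range_eq_top.2 fun x => ⟨W *ᵥ x, by
    rw [mulVecLin_apply, mulVec_mulVec, hW, one_mulVec]⟩

theorem rank_eq_of_transpose_mul_self_eq_one (hW : Wᵀ * W = 1) : W.rank = p := by
  rw [← rank_transpose_mul_self, hW, rank_one, Fintype.card_fin]

end Matrix

open Module in
theorem Matrix.exists_transpose_mul_self_eq_one_and_range_eq {n : Type*} [Fintype n]
    (V : Submodule ℝ (n → ℝ)) :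
    ∃ W : Matrix n (Fin (finrank ℝ V)) ℝ,
      Wᵀ * W = 1 ∧ LinearMap.range W.mulVecLin = V := by
  let e : EuclideanSpace ℝ n ≃ₗ[ℝ] (n → ℝ) := WithLp.linearEquiv 2 ℝ (n → ℝ)
  let V' := V.map e.symm.toLinearMap
  let b : OrthonormalBasis (Fin (finrank ℝ V)) ℝ V' :=
    (stdOrthonormalBasis ℝ V').reindex (finCongr (LinearEquiv.finrank_map_eq e.symm V))
  refine ⟨of fun i j => (b j : EuclideanSpace ℝ n) i, ?_, ?_⟩
  · ext j k
    have := orthonormal_iff_ite.1 b.orthonormal j k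
    simp only [Submodule.coe_inner, EuclideanSpace.inner_eq_star_dotProduct, star_trivial] at this
    rw [mul_apply, one_apply, ← this, dotProduct]
    exact Finset.sum_congr rfl fun i _ => mul_comm _ _
  · have hcol : (of fun i j => (b j : EuclideanSpace ℝ n) i).col =
        (e.toLinearMap ∘ₗ V'.subtype) ∘ b := rfl
    rw [range_mulVecLin, hcol, Set.range_comp, Submodule.span_image, ← b.coe_toBasis,
      b.toBasis.span_eq, Submodule.map_comp, Submodule.map_top, Submodule.range_subtype]
    exact (Submodule.map_symm_eq_iff e).1 rfl

theorem avg_apply_of_posSemidef {q r : ℕ} {M : Matrix (Fin q) (Fin r) ℝ}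
    (h : (1 - Mᵀ * M).PosSemidef) (f : (Fin r → ℝ) → ℝ) (z : Fin q → ℝ) :
    avg M f z = ∫ y, f (Mᵀ *ᵥ z + cfc Real.sqrt (1 - Mᵀ * M) *ᵥ y) ∂stdGaussian r := by
  rw [avg, dif_pos h, h.1.cfc_eq]
  rfl

open scoped MatrixOrder in
theorem avg_apply_of_isStarProjection {q : ℕ} {P : Matrix (Fin q) (Fin q) ℝ}
    (hP : IsStarProjection P) (f : (Fin q → ℝ) → ℝ) (z : Fin q → ℝ) :
    avg P f z = ∫ y, f (P *ᵥ z + (1 - P) *ᵥ y) ∂stdGaussian q := by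
  have hPT : Pᵀ = P := (isStarProjection_iff_transpose.1 hP).1
  have hQ : IsStarProjection (1 - P) := hP.one_sub
  have hPP : Pᵀ * P = P := by rw [hPT, hP.isIdempotentElem.eq]
  rw [avg_apply_of_posSemidef (by rw [hPP]; exact nonneg_iff_posSemidef.1 hQ.nonneg), hPP,
    hQ.cfc_sqrt, hPT]

section Averaging

variable {q : ℕ} {P : Matrix (Fin q) (Fin q) ℝ} {f : (Fin q → ℝ) → ℝ}

theorem avg_add_of_mulVec_eq_zero (hP : IsStarProjection P) {v : Fin q → ℝ} (hv : P *ᵥ v = 0)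
    (z : Fin q → ℝ) : avg P f (z + v) = avg P f z := by
  rw [avg_apply_of_isStarProjection hP, avg_apply_of_isStarProjection hP, mulVec_add, hv,
    add_zero]

theorem avg_eq_self_of_forall_add (hP : IsStarProjection P)
    (hf : ∀ v, P *ᵥ v = 0 → ∀ x, f (x + v) = f x) : avg P f = f := by
  have hker (y : Fin q → ℝ) : P *ᵥ ((1 - P) *ᵥ y) = 0 := by
    rw [mulVec_mulVec, hP.mul_one_sub_self, zero_mulVec]
  funext z
  rw [avg_apply_of_isStarProjection hP]
  simp_rw [hf _ (hker _)]
  rw [integral_const, probReal_univ, one_smul, ← hf _ (hker z), sub_mulVec, one_mulVec,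
    add_sub_cancel]

theorem forall_add_eq_of_avg_ae_eq (hP : IsStarProjection P) (hf : Continuous f)
    (h : avg P f =ᵐ[stdGaussian q] f) {v : Fin q → ℝ} (hv : P *ᵥ v = 0)
    (x : Fin q → ℝ) :
    f (x + v) = f x := by
  suffices (fun x => f (x + v)) = f from congrFun this x
  refine Measure.eq_of_ae_eq (μ := stdGaussian q) ?_ (hf.comp (continuous_add_const v)) hf
  calc (fun x => f (x + v)) =ᵐ[stdGaussian q] fun x => avg P f (x + v) :=
        (quasiMeasurePreserving_add_right_stdGaussian q v).ae_eq h.symm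
    _ = avg P f := funext (avg_add_of_mulVec_eq_zero hP hv)
    _ =ᵐ[stdGaussian q] f := h

theorem avg_ae_eq_self_iff (hP : IsStarProjection P) (hf : Continuous f) :
    avg P f =ᵐ[stdGaussian q] f ↔ ∀ v, P *ᵥ v = 0 → ∀ x, f (x + v) = f x :=
  ⟨fun h _ => forall_add_eq_of_avg_ae_eq hP hf h,
    fun h => (avg_eq_self_of_forall_add hP h).eventuallyEq⟩

end Averaging

theorem forall_fderiv_apply_eq_zero_iff {E G : Type*} [NormedAddCommGroup E] [NormedSpace ℝ E]
    [NormedAddCommGroup G] [NormedSpace ℝ G] {f : E → G} (hf : Differentiable ℝ f) (v : E) :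
    (∀ x, fderiv ℝ f x v = 0) ↔ ∀ x (t : ℝ), f (x + t • v) = f x := by
  have hline (x : E) (t : ℝ) :
      HasDerivAt (fun s : ℝ => f (x + s • v)) (fderiv ℝ f (x + t • v) v) t := by
    refine (hf _).hasFDerivAt.comp_hasDerivAt t ?_
    simpa using ((hasDerivAt_id t).smul_const v).const_add x
  refine ⟨fun h x t => ?_, fun h x => ?_⟩
  · simpa using is_const_of_deriv_eq_zero (fun s => (hline x s).differentiableAt)
      (fun s => by rw [(hline x s).deriv, h]) t 0
  · have hconst : HasDerivAt (fun s : ℝ => f (x + s • v)) 0 0 := by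
      simpa only [h x] using hasDerivAt_const (0 : ℝ) (f x)
    simpa using (hline x 0).unique hconst

theorem ContinuousLinearMap.apply_eq_sum_mul_single {ι : Type*} [Fintype ι] [DecidableEq ι]
    (L : (ι → ℝ) →L[ℝ] ℝ) (v : ι → ℝ) : L v = ∑ i, v i * L (Pi.single i 1) := by
  conv_lhs => rw [pi_eq_sum_univ' v]
  simp [map_sum]

section GradientGram

variable {d : ℕ} {F : (Fin d → ℝ) → ℝ}
  (hdF : ∀ i, MemLp (fun x => fderiv ℝ F x (Pi.single i 1)) 2 (stdGaussian d))
include hdF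

theorem memLp_fderiv_apply (v : Fin d → ℝ) :
    MemLp (fun x => fderiv ℝ F x v) 2 (stdGaussian d) := by
  simp_rw [ContinuousLinearMap.apply_eq_sum_mul_single _ v]
  exact memLp_finsetSum _ (fun i _ => (hdF i).const_mul (v i))

theorem gradGram_mulVec_apply (v : Fin d → ℝ) (i : Fin d) :
    (gradGram F *ᵥ v) i =
      ∫ x, fderiv ℝ F x (Pi.single i 1) * fderiv ℝ F x v ∂stdGaussian d := by
  have hint (j : Fin d) : Integrable (fun x => fderiv ℝ F x (Pi.single i 1) *
      (v j * fderiv ℝ F x (Pi.single j 1))) (stdGaussian d) :=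
    (hdF i).integrable_mul ((hdF j).const_mul (v j))
  simp_rw [ContinuousLinearMap.apply_eq_sum_mul_single _ v, Finset.mul_sum]
  rw [integral_finsetSum _ fun j _ => hint j, mulVec, dotProduct]
  refine Finset.sum_congr rfl fun j _ => ?_
  simp_rw [gradGram, of_apply, ← integral_mul_const, mul_left_comm, mul_comm (v j)]

theorem dotProduct_gradGram_mulVec (v : Fin d → ℝ) :
    v ⬝ᵥ (gradGram F *ᵥ v) = ∫ x, fderiv ℝ F x v ^ 2 ∂stdGaussian d := by
  have hint (i : Fin d) : Integrable (fun x => v i * (fderiv ℝ F x (Pi.single i 1) *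
      fderiv ℝ F x v)) (stdGaussian d) :=
    ((hdF i).integrable_mul (memLp_fderiv_apply hdF v)).const_mul (v i)
  simp_rw [dotProduct, gradGram_mulVec_apply hdF, ← integral_const_mul]
  rw [← integral_finsetSum _ fun i _ => hint i]
  simp_rw [← mul_assoc, ← Finset.sum_mul, ← ContinuousLinearMap.apply_eq_sum_mul_single, sq]

theorem posSemidef_gradGram : (gradGram F).PosSemidef := by
  refine .of_dotProduct_mulVec_nonneg ?_ fun v => ?_
  · ext i j
    simp only [conjTranspose_apply, star_trivial, gradGram, of_apply, mul_comm]
  · rw [star_trivial, dotProduct_gradGram_mulVec hdF]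
    exact integral_nonneg fun x => sq_nonneg _

theorem gradGram_mulVec_eq_zero_iff (hF : Continuous (fderiv ℝ F)) (v : Fin d → ℝ) :
    gradGram F *ᵥ v = 0 ↔ ∀ x, fderiv ℝ F x v = 0 := by
  rw [← (posSemidef_gradGram hdF).dotProduct_mulVec_zero_iff, star_trivial,
    dotProduct_gradGram_mulVec hdF, integral_eq_zero_iff_of_nonneg (fun x => sq_nonneg _)
      ((memLp_fderiv_apply hdF v).integrable_sq)]
  constructor
  · intro h x
    have := Measure.eq_of_ae_eq (μ := stdGaussian d) h ((hF.clm_apply continuous_const).pow 2)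
      continuous_const
    simpa using congrFun this x
  · intro h
    exact .of_forall fun x => by simp [h x]

end GradientGram

section IntrinsicDimension

variable {d : ℕ} {F : (Fin d → ℝ) → ℝ} (hF1 : ContDiff ℝ 1 F)
  (hdF : ∀ i, MemLp (fun x => fderiv ℝ F x (Pi.single i 1)) 2 (stdGaussian d))
include hF1 hdF

theorem avg_ae_eq_self_iff_ker_le {P : Matrix (Fin d) (Fin d) ℝ} (hP : IsStarProjection P) :
    avg P F =ᵐ[stdGaussian d] F ↔
      LinearMap.ker P.mulVecLin ≤ LinearMap.ker (gradGram F).mulVecLin := by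
  have hker (v : Fin d → ℝ) :
      gradGram F *ᵥ v = 0 ↔ ∀ x (t : ℝ), F (x + t • v) = F x := by
    rw [gradGram_mulVec_eq_zero_iff hdF (hF1.continuous_fderiv one_ne_zero),
      forall_fderiv_apply_eq_zero_iff (hF1.differentiable one_ne_zero)]
  rw [avg_ae_eq_self_iff hP hF1.continuous]
  refine ⟨fun h v (hv : P *ᵥ v = 0) => (hker v).2 fun x t => h (t • v) ?_ x,
    fun h v hv x => ?_⟩
  · rw [mulVec_smul, hv, smul_zero]
  · simpa using (hker v).1 (h hv) x 1

theorem range_gradGram_le_of_avg_ae_eq {p : ℕ} {W : Matrix (Fin d) (Fin p) ℝ}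
    (hW : Wᵀ * W = 1)
    (h : avg (W * Wᵀ) F =ᵐ[stdGaussian d] F) :
    LinearMap.range (gradGram F).mulVecLin ≤ LinearMap.range W.mulVecLin := by
  have hP := isStarProjection_mul_transpose hW
  rw [← range_mulVecLin_mul_transpose hW,
    ← ker_mulVecLin_le_iff_range_le hP (posSemidef_gradGram hdF),
    ← avg_ae_eq_self_iff_ker_le hF1 hdF hP]
  exact h

theorem avg_ae_eq_self_of_range_le {P : Matrix (Fin d) (Fin d) ℝ} (hP : IsStarProjection P)
    (hrange : LinearMap.range (gradGram F).mulVecLin ≤ LinearMap.range P.mulVecLin) :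
    avg P F =ᵐ[stdGaussian d] F :=
  (avg_ae_eq_self_iff_ker_le hF1 hdF hP).2
    ((ker_mulVecLin_le_iff_range_le hP (posSemidef_gradGram hdF)).2 hrange)

end IntrinsicDimension

theorem intrinsicDim_eq_rank_gradGram_general {d : ℕ} (F : (Fin d → ℝ) → ℝ)
    (hF1 : ContDiff ℝ 1 F)
    (hdF : ∀ i, MemLp (fun x => fderiv ℝ F x (Pi.single i 1)) 2 (stdGaussian d)) :
    intrinsicDim F = (gradGram F).rank ∧
    (∀ P : Matrix (Fin d) (Fin d) ℝ, Pᵀ = P → P * P = P →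
      LinearMap.range P.mulVecLin = LinearMap.range (gradGram F).mulVecLin →
      avg P F =ᵐ[stdGaussian d] F) ∧
    (∀ W : Matrix (Fin d) (Fin (intrinsicDim F)) ℝ, Wᵀ * W = 1 →
      avg (W * Wᵀ) F =ᵐ[stdGaussian d] F →
      LinearMap.range W.mulVecLin = LinearMap.range (gradGram F).mulVecLin) := by
  obtain ⟨W₀, hW₀, hW₀range⟩ : ∃ W : Matrix (Fin d) (Fin (gradGram F).rank) ℝ,
      Wᵀ * W = 1 ∧ LinearMap.range W.mulVecLin = LinearMap.range (gradGram F).mulVecLin :=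
    exists_transpose_mul_self_eq_one_and_range_eq _
  have hmem : (gradGram F).rank ∈ {p : ℕ | ∃ W : Matrix (Fin d) (Fin p) ℝ, Wᵀ * W = 1 ∧
      avg (W * Wᵀ) F =ᵐ[stdGaussian d] F} :=
    ⟨W₀, hW₀, avg_ae_eq_self_of_range_le hF1 hdF (isStarProjection_mul_transpose hW₀)
      (by rw [range_mulVecLin_mul_transpose hW₀, hW₀range])⟩
  have hdim : intrinsicDim F = (gradGram F).rank := by
    refine le_antisymm (Nat.sInf_le hmem) (le_csInf ⟨_, hmem⟩ ?_)
    rintro p ⟨W, hW, h⟩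
    rw [← rank_eq_of_transpose_mul_self_eq_one hW]
    exact Submodule.finrank_mono (range_gradGram_le_of_avg_ae_eq hF1 hdF hW h)
  refine ⟨hdim, fun P hPT hPP hrange => avg_ae_eq_self_of_range_le hF1 hdF
    (isStarProjection_iff_transpose.2 ⟨hPT, hPP⟩) hrange.ge, fun W hW h => ?_⟩
  refine (Submodule.eq_of_le_of_finrank_eq (range_gradGram_le_of_avg_ae_eq hF1 hdF hW h) ?_).symm
  rw [← rank, ← rank, rank_eq_of_transpose_mul_self_eq_one hW, hdim]

/-- The support and intrinsic dimension of `F` are determined by the gradient Gram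
matrix: `d(F) = rank(G_F)`, the orthogonal projection onto `range(G_F)` fixes `F`,
and any Stiefel frame supporting `F` spans `range(G_F)`. -/
theorem intrinsicDim_eq_rank_gradGram {d : ℕ} (hd : 0 < d) (F : (Fin d → ℝ) → ℝ)
    (hF1 : ContDiff ℝ 1 F) (hF : MemLp F 2 (stdGaussian d))
    (hdF : ∀ i, MemLp (fun x => fderiv ℝ F x (Pi.single i 1)) 2 (stdGaussian d)) :
    intrinsicDim F = (gradGram F).rank ∧
    (∀ P : Matrix (Fin d) (Fin d) ℝ, Pᵀ = P → P * P = P →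
      LinearMap.range P.mulVecLin = LinearMap.range (gradGram F).mulVecLin →
      avg P F =ᵐ[stdGaussian d] F) ∧
    (∀ W : Matrix (Fin d) (Fin (intrinsicDim F)) ℝ, Wᵀ * W = 1 →
      avg (W * Wᵀ) F =ᵐ[stdGaussian d] F →
      LinearMap.range W.mulVecLin = LinearMap.range (gradGram F).mulVecLin) :=
  intrinsicDim_eq_rank_gradGram_general F hF1 hdF

end
end

section
/- For every integer N ≥ 3 there exists a function Z : ℤ/Nℤ → ℝ that is even (Z(−j) = Z(j) for all j ∈ ℤ/Nℤ) and such that for every k ∈ ℤ/Nℤ with k ≠ 0 and k + k ≠ 0, the cyclic autocorrelation and self-convolution of Z at k satisfy φ_Z(k) = φ̄_Z(k) < 0. -/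
/-!
Take `Z = δ₀ - 1/N`, a unit spike at `0` with its mean removed. It is even, so the
autocorrelation and the self-convolution coincide (substitute `l ↦ -l`). For `k ≠ 0` the
spike does not overlap its shift, and the two cross terms and the constant term give
`φ_Z(k) = -2/N + N · (1/N)² = -1/N`.
-/

open Finset

section

variable {G R : Type*} [AddCommGroup G] [Fintype G] [CommRing R]

theorem sum_mul_apply_add_eq_sum_mul_apply_sub {Z : G → R} (hZ : ∀ j, Z (-j) = Z j) (k : G) :
    ∑ l, Z l * Z (l + k) = ∑ l, Z l * Z (k - l) :=
  Fintype.sum_equiv (Equiv.neg G) _ _ fun l => by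
    rw [Equiv.neg_apply, hZ, sub_neg_eq_add, add_comm]

variable [DecidableEq G]

theorem sum_spike_sub_mul_spike_sub {k : G} (hk : k ≠ 0) (c : R) :
    ∑ l : G, ((if l = 0 then 1 else 0) - c) * ((if l + k = 0 then 1 else 0) - c)
      = Fintype.card G * c ^ 2 - 2 * c := by
  have hspike : ∑ l : G, (if l = 0 then (1 : R) else 0) = 1 := by simp
  have hshift : ∑ l : G, (if l + k = 0 then (1 : R) else 0) = 1 := by
    simp [add_eq_zero_iff_eq_neg]
  have hdisjoint : ∀ l : G, (if l = 0 then (1 : R) else 0) * (if l + k = 0 then 1 else 0) = 0 := by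
    intro l
    split_ifs with hl hlk <;> simp_all
  simp only [sub_mul, mul_sub, hdisjoint, sum_sub_distrib, ← sum_mul, ← mul_sum, hspike, hshift,
    sum_const, card_univ, nsmul_eq_mul]
  ring

end

theorem exists_nearly_negative_autocorrelation_general (N : ℕ) [NeZero N] :
    ∃ Z : ZMod N → ℝ,
      (∀ j : ZMod N, Z (-j) = Z j) ∧
      ∀ k : ZMod N, k ≠ 0 → k + k ≠ 0 →
        (∑ l : ZMod N, Z l * Z (l + k)) = (∑ l : ZMod N, Z l * Z (k - l)) ∧
        (∑ l : ZMod N, Z l * Z (l + k)) < 0 := by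
  set Z : ZMod N → ℝ := fun j => (if j = 0 then 1 else 0) - (N : ℝ)⁻¹
  have hZ : ∀ j, Z (-j) = Z j := fun j => by simp only [Z, neg_eq_zero]
  refine ⟨Z, hZ, fun k hk _ => ⟨sum_mul_apply_add_eq_sum_mul_apply_sub hZ k, ?_⟩⟩
  have hN : (0 : ℝ) < N := by exact_mod_cast Nat.pos_of_neZero N
  calc ∑ l, Z l * Z (l + k) = N * (N : ℝ)⁻¹ ^ 2 - 2 * (N : ℝ)⁻¹ := by
        rw [sum_spike_sub_mul_spike_sub hk, ZMod.card]
    _ = -(N : ℝ)⁻¹ := by field_simp; ring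
    _ < 0 := by simpa using hN

/-- Lemma 4.5: for every `N ≥ 3` there is an even sequence `Z : ℤ/N → ℝ` whose cyclic
autocorrelation `φ_Z` and self-convolution `φ̄_Z` agree and are negative at every
`k ≠ 0` with `k + k ≠ 0`. -/
theorem exists_nearly_negative_autocorrelation (N : ℕ) [NeZero N] (hN : 3 ≤ N) :
    ∃ Z : ZMod N → ℝ,
      (∀ j : ZMod N, Z (-j) = Z j) ∧
      ∀ k : ZMod N, k ≠ 0 → k + k ≠ 0 →
        (∑ l : ZMod N, Z l * Z (l + k)) = (∑ l : ZMod N, Z l * Z (k - l)) ∧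
        (∑ l : ZMod N, Z l * Z (l + k)) < 0 :=
  exists_nearly_negative_autocorrelation_general N
end

section
/- Let N be a positive integer, s an even positive integer, Z : ℤ/Nℤ → ℝ, and θ ∈ ℝ. Set w_j = (cos(2πj/N), sin(2πj/N)) ∈ ℝ² for j ∈ ℤ/Nℤ, and g_Z(x) = Σ_{j=0}^{N−1} Z(j) · h_s(w_j · x) for x ∈ ℝ². Let R_θ = [[cos θ, −sin θ], [sin θ, cos θ]] and A = diag(1, −1). Then: (i) ∫_{ℝ²} g_Z(R_θᵀ x) g_Z(x) dγ_2(x) = Σ_{l=0}^{N−1} φ_Z(l) · cos(2πl/N − θ)^s, where φ_Z(l) = Σ_{j∈ℤ/Nℤ} Z(j) Z(j + l); (ii) ∫_{ℝ²} g_Z((A R_θ)ᵀ x) g_Z(x) dγ_2(x) = Σ_{k=0}^{N−1} φ̄_Z(k) · cos(2πk/N + θ)^s, where φ̄_Z(k) = Σ_{l∈ℤ/Nℤ} Z(l) Z(k − l). -/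
open MeasureTheory ProbabilityTheory Matrix

noncomputable section

/-- Normalized probabilists' Hermite function `h_k = He_k / √(k!)`. -/
def hermiteFn (k : ℕ) (x : ℝ) : ℝ :=
  (Polynomial.aeval x (Polynomial.hermite k)) / Real.sqrt (Nat.factorial k)

/-!
Gaussian integration by parts, `∫ x f(x) dγ = ∫ f' dγ`, combined with the recursion
`He (n+1) = X He n - He n'` gives `∫ He n · p dγ = ∫ p⁽ⁿ⁾ dγ` for every polynomial `p`; for
`p = He n (a · + b)` this is `E[He n (X) He n (a X + b)] = n! aⁿ`. Choosing an orthonormal basis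
whose first vector is the unit vector `u` and integrating out that coordinate first gives
`E[h_s ⟪u, x⟫ h_s ⟪v, x⟫] = ⟪u, v⟫ ^ s` for a standard Gaussian `x`. Expanding `g_Z` bilinearly,
the pair `(j, k)` contributes `Z j Z k cos (angle between the two directions) ^ s`, and grouping
the double sum over `ℤ/Nℤ` by `k - j` (resp. `j + k`) gives the autocorrelation
(resp. self-convolution) of `Z`.
-/

open Polynomial Real
open scoped NNReal Nat

lemma hasDerivAt_gaussianPDFReal (μ : ℝ) {v : ℝ≥0} (hv : v ≠ 0) (x : ℝ) :
    HasDerivAt (gaussianPDFReal μ v) (-((x - μ) / v) * gaussianPDFReal μ v x) x := by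
  have hv' : (v : ℝ) ≠ 0 := NNReal.coe_ne_zero.mpr hv
  have hexponent : HasDerivAt (fun y => -(y - μ) ^ 2 / (2 * v)) (-((x - μ) / v)) x := by
    refine ((((hasDerivAt_id' x).sub_const μ).fun_pow 2).fun_neg.div_const
      (2 * (v : ℝ))).congr_deriv ?_
    field_simp
    ring
  refine (hexponent.exp.const_mul (√(2 * π * v))⁻¹).congr_deriv ?_
  rw [gaussianPDFReal_def]
  ring

lemma integrable_gaussianReal_iff {μ : ℝ} {v : ℝ≥0} (hv : v ≠ 0) {f : ℝ → ℝ} :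
    Integrable f (gaussianReal μ v) ↔ Integrable (fun x => gaussianPDFReal μ v x * f x) := by
  rw [gaussianReal_of_var_ne_zero μ hv, gaussianPDF_def, integrable_withDensity_iff_integrable_smul'
    (by fun_prop) (ae_of_all _ fun _ => ENNReal.ofReal_lt_top)]
  simp_rw [ENNReal.toReal_ofReal (gaussianPDFReal_nonneg μ v _), smul_eq_mul]

theorem integral_sub_mul_gaussianReal_eq_mul_integral_deriv {μ : ℝ} {v : ℝ≥0} (hv : v ≠ 0)
    {f f' : ℝ → ℝ} (hf : ∀ x, HasDerivAt f (f' x) x) (hf_int : Integrable f (gaussianReal μ v))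
    (hf'_int : Integrable f' (gaussianReal μ v))
    (hxf_int : Integrable (fun x => (x - μ) * f x) (gaussianReal μ v)) :
    ∫ x, (x - μ) * f x ∂gaussianReal μ v = v * ∫ x, f' x ∂gaussianReal μ v := by
  have hv' : (v : ℝ) ≠ 0 := NNReal.coe_ne_zero.mpr hv
  rw [integrable_gaussianReal_iff hv] at hf_int hf'_int hxf_int
  have ibp := integral_mul_deriv_eq_deriv_mul_of_integrable (u := f)
    (v := gaussianPDFReal μ v) (fun x _ => hf x) (fun x _ => hasDerivAt_gaussianPDFReal μ hv x)
    ((hxf_int.div_const (-v)).congr (ae_of_all _ fun x => by simp only [Pi.mul_apply]; field_simp))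
    (hf'_int.congr (ae_of_all _ fun x => mul_comm _ _))
    (hf_int.congr (ae_of_all _ fun x => mul_comm _ _))
  simp only [integral_gaussianReal_eq_integral_smul hv, smul_eq_mul]
  calc ∫ x, gaussianPDFReal μ v x * ((x - μ) * f x)
      = -v * ∫ x, f x * (-((x - μ) / v) * gaussianPDFReal μ v x) := by
        rw [← integral_const_mul]
        congr 1 with x
        field_simp
    _ = v * ∫ x, gaussianPDFReal μ v x * f' x := by
        simp_rw [ibp, mul_comm (f' _)]
        ring

lemma integrable_pow_gaussianReal (μ : ℝ) (v : ℝ≥0) (n : ℕ) :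
    Integrable (fun x : ℝ => x ^ n) (gaussianReal μ v) :=
  integrable_pow_of_integrable_exp_mul one_ne_zero (integrable_exp_mul_gaussianReal 1)
    (integrable_exp_mul_gaussianReal (-1)) n

lemma integrable_eval_gaussianReal (μ : ℝ) (v : ℝ≥0) (p : ℝ[X]) :
    Integrable (fun x => p.eval x) (gaussianReal μ v) := by
  simp_rw [eval_eq_sum_range]
  exact integrable_finsetSum _ fun n _ => (integrable_pow_gaussianReal μ v n).const_mul _

def gaussianExpectation : ℝ[X] →ₗ[ℝ] ℝ where
  toFun p := ∫ x, p.eval x ∂gaussianReal 0 1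
  map_add' p q := by
    simp only [eval_add]
    exact integral_add (integrable_eval_gaussianReal 0 1 p) (integrable_eval_gaussianReal 0 1 q)
  map_smul' c p := by simp [integral_const_mul]

lemma gaussianExpectation_apply (p : ℝ[X]) :
    gaussianExpectation p = ∫ x, p.eval x ∂gaussianReal 0 1 := rfl

lemma gaussianExpectation_C (c : ℝ) : gaussianExpectation (C c) = c := by
  simp [gaussianExpectation_apply]

lemma gaussianExpectation_X_mul (p : ℝ[X]) :
    gaussianExpectation (X * p) = gaussianExpectation (derivative p) := by
  have h := integral_sub_mul_gaussianReal_eq_mul_integral_deriv one_ne_zero (μ := 0)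
    (fun x => p.hasDerivAt x) (integrable_eval_gaussianReal 0 1 p)
    (integrable_eval_gaussianReal 0 1 _)
    ((integrable_eval_gaussianReal 0 1 (X * p)).congr (ae_of_all _ fun x => by simp))
  simpa [gaussianExpectation_apply] using h

lemma gaussianExpectation_hermite_mul (n : ℕ) (p : ℝ[X]) :
    gaussianExpectation ((hermite n).map (Int.castRingHom ℝ) * p) =
      gaussianExpectation (derivative^[n] p) := by
  induction n generalizing p with
  | zero => simp
  | succ n ih =>
    set H := (hermite n).map (Int.castRingHom ℝ)
    have hsucc : (hermite (n + 1)).map (Int.castRingHom ℝ) * p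
        = X * (H * p) - derivative H * p := by
      simp only [hermite_succ, Polynomial.map_sub, Polynomial.map_mul, map_X, derivative_map, H]
      ring
    rw [hsucc, map_sub, gaussianExpectation_X_mul, derivative_mul, map_add, add_sub_cancel_left,
      ih, Function.iterate_succ_apply]

lemma iterate_derivative_hermite_self (n : ℕ) : derivative^[n] (hermite n) = C (n ! : ℤ) := by
  rw [eq_C_of_natDegree_eq_zero (p := derivative^[n] (hermite n))
      (by simpa using natDegree_iterate_derivative (hermite n) n),
    coeff_iterate_derivative, zero_add, Nat.descFactorial_self, coeff_hermite_self, nsmul_one]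

lemma iterate_derivative_comp_affine {R : Type*} [CommSemiring R] (p : R[X]) (a b : R) (k : ℕ) :
    derivative^[k] (p.comp (C a * X + C b)) =
      C (a ^ k) * (derivative^[k] p).comp (C a * X + C b) := by
  induction k with
  | zero => simp
  | succ k ih =>
    rw [Function.iterate_succ_apply', ih, derivative_C_mul, derivative_comp,
      Function.iterate_succ_apply']
    simp only [derivative_add, derivative_mul, derivative_C, derivative_X, zero_mul, zero_add,
      mul_one, add_zero, pow_succ, C_mul]
    ring

theorem integral_hermiteFn_mul_hermiteFn_affine (n : ℕ) (a b : ℝ) :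
    ∫ x, hermiteFn n x * hermiteFn n (a * x + b) ∂gaussianReal 0 1 = a ^ n := by
  have hprod (x : ℝ) : hermiteFn n x * hermiteFn n (a * x + b) =
      ((hermite n).map (Int.castRingHom ℝ) *
        ((hermite n).map (Int.castRingHom ℝ)).comp (C a * X + C b)).eval x / n ! := by
    rw [hermiteFn, hermiteFn, div_mul_div_comm, Real.mul_self_sqrt (Nat.cast_nonneg _)]
    simp [aeval_def, eval₂_eq_eval_map]
  have hderiv : derivative^[n] (((hermite n).map (Int.castRingHom ℝ)).comp (C a * X + C b)) =
      C (a ^ n * n !) := by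
    simp [iterate_derivative_comp_affine, iterate_derivative_map, iterate_derivative_hermite_self]
  simp_rw [hprod, integral_div, ← gaussianExpectation_apply, gaussianExpectation_hermite_mul,
    hderiv, gaussianExpectation_C]
  field_simp

section Pi

variable {ι : Type*} [Fintype ι]

lemma integrable_eval_mvPolynomial_pi (μ : ℝ) (v : ℝ≥0) (P : MvPolynomial ι ℝ) :
    Integrable (fun y => MvPolynomial.eval y P) (Measure.pi fun _ : ι => gaussianReal μ v) := by
  simp_rw [MvPolynomial.eval_eq]
  refine integrable_finsetSum _ fun d _ => Integrable.const_mul ?_ _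
  simp_rw [show ∀ y : ι → ℝ, ∏ i ∈ d.support, y i ^ d i = ∏ i, y i ^ d i from
    fun y => Finsupp.prod_pow d y]
  exact Integrable.fintype_prod fun i => integrable_pow_gaussianReal μ v (d i)

lemma integrable_eval_dotProduct_mul_eval_dotProduct_pi (μ : ℝ) (v : ℝ≥0) (p q : ℝ[X])
    (a b : ι → ℝ) :
    Integrable (fun y => p.eval (a ⬝ᵥ y) * q.eval (b ⬝ᵥ y))
      (Measure.pi fun _ : ι => gaussianReal μ v) := by
  have hlinear (c y : ι → ℝ) :
      c ⬝ᵥ y = MvPolynomial.aeval y (∑ i, MvPolynomial.C (c i) * MvPolynomial.X i) := by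
    simp [dotProduct]
  convert integrable_eval_mvPolynomial_pi μ v
    (aeval (∑ i, MvPolynomial.C (a i) * MvPolynomial.X i) p *
      aeval (∑ i, MvPolynomial.C (b i) * MvPolynomial.X i) q) using 2 with y
  change _ = MvPolynomial.aeval y (_ * _)
  rw [map_mul, ← aeval_algHom_apply, ← aeval_algHom_apply, ← hlinear, ← hlinear,
    coe_aeval_eq_eval, coe_aeval_eq_eval]

lemma integrable_hermiteFn_dotProduct_mul_hermiteFn_dotProduct_pi (μ : ℝ) (v : ℝ≥0) (s : ℕ)
    (a b : ι → ℝ) :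
    Integrable (fun y => hermiteFn s (a ⬝ᵥ y) * hermiteFn s (b ⬝ᵥ y))
      (Measure.pi fun _ : ι => gaussianReal μ v) := by
  refine ((integrable_eval_dotProduct_mul_eval_dotProduct_pi μ v
    ((hermite s).map (Int.castRingHom ℝ)) ((hermite s).map (Int.castRingHom ℝ)) a b).div_const
      (s ! : ℝ)).congr (ae_of_all _ fun y => ?_)
  simp only [hermiteFn, div_mul_div_comm, Real.mul_self_sqrt (Nat.cast_nonneg _)]
  simp [aeval_def, eval₂_eq_eval_map]

theorem integral_hermiteFn_apply_zero_mul_hermiteFn_dotProduct_pi {n : ℕ} (s : ℕ)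
    (c : Fin (n + 1) → ℝ) :
    ∫ y, hermiteFn s (y 0) * hermiteFn s (c ⬝ᵥ y) ∂(Measure.pi fun _ => gaussianReal 0 1) =
      c 0 ^ s := by
  have e := measurePreserving_piFinSuccAbove (fun _ : Fin (n + 1) => gaussianReal 0 1) 0
  have hint := integrable_hermiteFn_dotProduct_mul_hermiteFn_dotProduct_pi 0 1 s (Pi.single 0 1) c
  simp only [single_dotProduct, one_mul] at hint
  rw [← e.symm.integral_comp', integral_prod_symm]
  · simp [Fin.sum_univ_succ, dotProduct, integral_hermiteFn_mul_hermiteFn_affine]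
  · exact (e.symm.integrable_comp_emb (MeasurableEquiv.measurableEmbedding _)).mpr hint

end Pi

@[fun_prop]
lemma continuous_hermiteFn (k : ℕ) : Continuous (hermiteFn k) :=
  (Polynomial.continuous_aeval _).div_const _

open scoped RealInnerProductSpace in
theorem integral_hermiteFn_inner_mul_hermiteFn_inner {E : Type*} [NormedAddCommGroup E]
    [InnerProductSpace ℝ E] [FiniteDimensional ℝ E] [MeasurableSpace E] [BorelSpace E]
    {u : E} (hu : ‖u‖ = 1) (v : E) (s : ℕ) :
    ∫ x, hermiteFn s ⟪u, x⟫ * hermiteFn s ⟪v, x⟫ ∂(ProbabilityTheory.stdGaussian E) =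
      ⟪u, v⟫ ^ s := by
  have : Nontrivial E := nontrivial_of_ne u 0 (by rintro rfl; simp at hu)
  obtain ⟨n, hn⟩ := Nat.exists_eq_succ_of_ne_zero (Module.finrank_pos (R := ℝ) (M := E)).ne'
  obtain ⟨b, hb⟩ := Orthonormal.exists_orthonormalBasis_extension_of_card_eq
    (𝕜 := ℝ) (ι := Fin (n + 1)) (by simpa using hn) (v := fun _ => u) (s := {0}) (by
      rw [orthonormal_iff_ite]
      rintro ⟨i, hi⟩ ⟨j, hj⟩
      simp only [Set.mem_singleton_iff] at hi hj
      subst hi hj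
      simp [hu])
  have hb0 : b 0 = u := hb 0 rfl
  have hcoord (w : E) (x : Fin (n + 1) → ℝ) :
      ⟪w, ∑ i, x i • b i⟫ = (fun i => ⟪w, b i⟫) ⬝ᵥ x := by
    simp [inner_sum, real_inner_smul_right, dotProduct, mul_comm]
  rw [stdGaussian_eq_map_pi_orthonormalBasis b,
    integral_map (Measurable.aemeasurable (by fun_prop)) (by fun_prop)]
  simp_rw [hcoord v, ← hb0, b.orthonormal.inner_right_fintype]
  rw [integral_hermiteFn_apply_zero_mul_hermiteFn_dotProduct_pi, real_inner_comm]

theorem integral_hermiteFn_dotProduct_mul_hermiteFn_dotProduct_pi {ι : Type*} [Fintype ι]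
    {u : ι → ℝ} (hu : u ⬝ᵥ u = 1) (v : ι → ℝ) (s : ℕ) :
    ∫ x, hermiteFn s (u ⬝ᵥ x) * hermiteFn s (v ⬝ᵥ x) ∂(Measure.pi fun _ => gaussianReal 0 1) =
      (u ⬝ᵥ v) ^ s := by
  have hinner (a x : ι → ℝ) : a ⬝ᵥ x = inner ℝ (WithLp.toLp 2 a) (WithLp.toLp 2 x) := by
    simp [EuclideanSpace.inner_eq_star_dotProduct, dotProduct_comm]
  have hnorm : ‖WithLp.toLp 2 u‖ = 1 := by
    rw [← pow_eq_one_iff_of_nonneg (norm_nonneg _) two_ne_zero, ← real_inner_self_eq_norm_sq,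
      ← hinner, hu]
  simp_rw [hinner]
  rw [← integral_map (f := fun z => hermiteFn s (inner ℝ (WithLp.toLp 2 u) z) *
      hermiteFn s (inner ℝ (WithLp.toLp 2 v) z)) (by fun_prop) (by fun_prop),
    map_pi_eq_stdGaussian, integral_hermiteFn_inner_mul_hermiteFn_inner hnorm]

theorem integral_sum_hermiteFn_mul_sum_hermiteFn_pi {ι κ κ' : Type*} [Fintype ι] [Fintype κ]
    [Fintype κ'] (s : ℕ) (a : κ → ℝ) {u : κ → ι → ℝ} (hu : ∀ j, u j ⬝ᵥ u j = 1) (b : κ' → ℝ)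
    (v : κ' → ι → ℝ) :
    ∫ x, (∑ j, a j * hermiteFn s (u j ⬝ᵥ x)) * (∑ k, b k * hermiteFn s (v k ⬝ᵥ x))
        ∂(Measure.pi fun _ => gaussianReal 0 1) =
      ∑ j, ∑ k, a j * b k * (u j ⬝ᵥ v k) ^ s := by
  have hint (j : κ) (k : κ') :=
    (integrable_hermiteFn_dotProduct_mul_hermiteFn_dotProduct_pi 0 1 s (u j) (v k)).const_mul
      (a j * b k)
  simp_rw [Finset.sum_mul_sum, mul_mul_mul_comm]
  rw [integral_finsetSum _ fun j _ => integrable_finsetSum _ fun k _ => hint j k]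
  refine Finset.sum_congr rfl fun j _ => ?_
  rw [integral_finsetSum _ fun k _ => hint j k]
  refine Finset.sum_congr rfl fun k _ => ?_
  rw [integral_const_mul, integral_hermiteFn_dotProduct_mul_hermiteFn_dotProduct_pi (hu j)]

section Convolution

variable {G R : Type*} [AddCommGroup G] [Fintype G] [CommSemiring R]

lemma sum_sum_mul_apply_sub (a b F : G → R) :
    ∑ j, ∑ k, a j * b k * F (k - j) = ∑ l, (∑ j, a j * b (j + l)) * F l := by
  simp_rw [Finset.sum_mul]
  conv_rhs => rw [Finset.sum_comm]
  refine Finset.sum_congr rfl fun j _ => ?_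
  rw [← Equiv.sum_comp (Equiv.addLeft j)]
  simp

lemma sum_sum_mul_apply_add (a b F : G → R) :
    ∑ j, ∑ k, a j * b k * F (j + k) = ∑ m, (∑ l, a l * b (m - l)) * F m := by
  simp_rw [Finset.sum_mul]
  conv_rhs => rw [Finset.sum_comm]
  refine Finset.sum_congr rfl fun j _ => ?_
  rw [← Equiv.sum_comp (Equiv.subRight j)]
  simp

end Convolution

lemma cos_sin_dotProduct_cos_sin (α β : ℝ) :
    ![cos α, sin α] ⬝ᵥ ![cos β, sin β] = cos (α - β) := by
  simp [dotProduct, Fin.sum_univ_two, cos_sub]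

lemma rotation_mulVec_cos_sin (θ α : ℝ) :
    !![cos θ, -sin θ; sin θ, cos θ] *ᵥ ![cos α, sin α] = ![cos (α + θ), sin (α + θ)] := by
  ext i
  fin_cases i <;> simp [mulVec, dotProduct, cos_add, sin_add] <;> ring

lemma reflection_mulVec_cos_sin (α : ℝ) :
    !![1, 0; 0, -1] *ᵥ ![cos α, sin α] = ![cos (-α), sin (-α)] := by
  ext i
  fin_cases i <;> simp [mulVec, dotProduct]

section CyclicAngles

variable {N : ℕ} [NeZero N]

lemma cos_two_pi_val_div_add_of_intCast_eq {j : ZMod N} {z : ℤ} (h : (z : ZMod N) = j)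
    (ψ : ℝ) : cos (2 * π * j.val / N + ψ) = cos (2 * π * z / N + ψ) := by
  obtain ⟨m, hm⟩ := (ZMod.intCast_eq_intCast_iff_dvd_sub z j.val N).mp (by simp [h])
  have hN : (N : ℝ) ≠ 0 := Nat.cast_ne_zero.mpr (NeZero.ne N)
  have hval : (j.val : ℝ) = z + N * m := by
    have := congrArg (Int.cast : ℤ → ℝ) hm
    push_cast at this
    linarith
  rw [hval, ← cos_add_int_mul_two_pi (2 * π * z / N + ψ) m]
  congr 1
  field_simp
  ring

lemma cos_two_pi_val_div_add_sub (j k : ZMod N) (θ : ℝ) :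
    cos (2 * π * j.val / N + θ - 2 * π * k.val / N) = cos (2 * π * (k - j).val / N - θ) := by
  rw [sub_eq_add_neg _ θ, cos_two_pi_val_div_add_of_intCast_eq (z := k.val - j.val) (by simp),
    ← cos_neg]
  congr 1
  push_cast
  ring

lemma cos_neg_two_pi_val_div_add_sub (j k : ZMod N) (θ : ℝ) :
    cos (-(2 * π * j.val / N + θ) - 2 * π * k.val / N) = cos (2 * π * (j + k).val / N + θ) := by
  rw [cos_two_pi_val_div_add_of_intCast_eq (z := j.val + k.val) (by simp), ← cos_neg]
  congr 1
  push_cast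
  ring

end CyclicAngles

theorem discrete_to_unitary_autocorrelation_general (N : ℕ) [NeZero N]
    (s : ℕ) (Z : ZMod N → ℝ) (θ : ℝ) :
    let w : ZMod N → Fin 2 → ℝ := fun j =>
      ![Real.cos (2 * Real.pi * (j.val : ℝ) / N), Real.sin (2 * Real.pi * (j.val : ℝ) / N)]
    let gZ : (Fin 2 → ℝ) → ℝ := fun x => ∑ j : ZMod N, Z j * hermiteFn s (w j ⬝ᵥ x)
    let Rθ : Matrix (Fin 2) (Fin 2) ℝ :=
      !![Real.cos θ, -Real.sin θ; Real.sin θ, Real.cos θ]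
    let A : Matrix (Fin 2) (Fin 2) ℝ := !![1, 0; 0, -1]
    (∫ x, gZ (Rθᵀ *ᵥ x) * gZ x ∂(stdGaussian 2)
        = ∑ l : ZMod N, (∑ j : ZMod N, Z j * Z (j + l)) *
            Real.cos (2 * Real.pi * (l.val : ℝ) / N - θ) ^ s) ∧
    (∫ x, gZ ((A * Rθ)ᵀ *ᵥ x) * gZ x ∂(stdGaussian 2)
        = ∑ k : ZMod N, (∑ l : ZMod N, Z l * Z (k - l)) *
            Real.cos (2 * Real.pi * (k.val : ℝ) / N + θ) ^ s) := by
  intro w gZ Rθ A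
  have hunit (α : ℝ) : ![cos α, sin α] ⬝ᵥ ![cos α, sin α] = 1 := by
    rw [cos_sin_dotProduct_cos_sin, sub_self, cos_zero]
  have htranspose (M : Matrix (Fin 2) (Fin 2) ℝ) (j : ZMod N) (x : Fin 2 → ℝ) :
      w j ⬝ᵥ (Mᵀ *ᵥ x) = (M *ᵥ w j) ⬝ᵥ x := by
    rw [dotProduct_mulVec, vecMul_transpose]
  constructor
  · simp only [gZ, htranspose, Rθ, w, rotation_mulVec_cos_sin]
    rw [_root_.stdGaussian, integral_sum_hermiteFn_mul_sum_hermiteFn_pi s Z (fun j => hunit _)]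
    simp_rw [cos_sin_dotProduct_cos_sin, cos_two_pi_val_div_add_sub]
    exact sum_sum_mul_apply_sub Z Z fun l => cos (2 * π * l.val / N - θ) ^ s
  · simp only [gZ, htranspose, Rθ, w, A, ← mulVec_mulVec, rotation_mulVec_cos_sin,
      reflection_mulVec_cos_sin]
    rw [_root_.stdGaussian, integral_sum_hermiteFn_mul_sum_hermiteFn_pi s Z (fun j => hunit _)]
    simp_rw [cos_sin_dotProduct_cos_sin, cos_neg_two_pi_val_div_add_sub]
    exact sum_sum_mul_apply_add Z Z fun k => cos (2 * π * k.val / N + θ) ^ s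

/-- Fact 4.4 (discrete-to-unitary autocorrelation): the Gaussian correlation of
`g_Z = Σ_j Z_j h_s(w_j ⬝ ·)` with its rotation (resp. reflected rotation) is the
convolution of the cyclic autocorrelation (resp. self-convolution) of `Z` with
`cos^s`. -/
theorem discrete_to_unitary_autocorrelation (N : ℕ) [NeZero N] (hN : 0 < N)
    (s : ℕ) (hs : 0 < s) (hse : Even s) (Z : ZMod N → ℝ) (θ : ℝ) :
    let w : ZMod N → Fin 2 → ℝ := fun j =>
      ![Real.cos (2 * Real.pi * (j.val : ℝ) / N), Real.sin (2 * Real.pi * (j.val : ℝ) / N)]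
    let gZ : (Fin 2 → ℝ) → ℝ := fun x => ∑ j : ZMod N, Z j * hermiteFn s (w j ⬝ᵥ x)
    let Rθ : Matrix (Fin 2) (Fin 2) ℝ :=
      !![Real.cos θ, -Real.sin θ; Real.sin θ, Real.cos θ]
    let A : Matrix (Fin 2) (Fin 2) ℝ := !![1, 0; 0, -1]
    (∫ x, gZ (Rθᵀ *ᵥ x) * gZ x ∂(stdGaussian 2)
        = ∑ l : ZMod N, (∑ j : ZMod N, Z j * Z (j + l)) *
            Real.cos (2 * Real.pi * (l.val : ℝ) / N - θ) ^ s) ∧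
    (∫ x, gZ ((A * Rθ)ᵀ *ᵥ x) * gZ x ∂(stdGaussian 2)
        = ∑ k : ZMod N, (∑ l : ZMod N, Z l * Z (k - l)) *
            Real.cos (2 * Real.pi * (k.val : ℝ) / N + θ) ^ s) :=
  discrete_to_unitary_autocorrelation_general N s Z θ
end
end

section
/- Let T > 0, C > 0, τ > 0 and a ≥ 1. Let u : [0,T] → ℝ be differentiable, positive and non-decreasing, and let v : [0,T] → ℝ be nonnegative and measurable, such that u′(t) ≥ u(t)^a · v(t) for all t ∈ [0,T], and the Lebesgue measure of { t ∈ [0,T] : v(t) ≥ C } is at least τ. Then: (i) if a > 1, one has (a−1)·C·τ < u(0)^{1−a} and u(T) ≥ ( u(0)^{1−a} − (a−1)·C·τ )^{−1/(a−1)}; (ii) if a = 1, one has u(T) ≥ u(0) · e^{C·τ}. -/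
/-!
Let `Φ_a` be an antiderivative of `x ↦ x ^ (-a)` on `(0, ∞)`
(`log` for `a = 1`, `x ^ (1 - a) / (1 - a)` otherwise). Then
`(Φ_a ∘ u)' = u ^ (-a) u' ≥ v ≥ C · 1_{v ≥ C}` on `[0, T]`, so integrating gives
`Φ_a (u T) - Φ_a (u 0) ≥ C τ`; inverting `Φ_a` yields both bounds.
-/

open MeasureTheory Set

noncomputable def gronwallPrimitive (a x : ℝ) : ℝ :=
  if a = 1 then Real.log x else x ^ (1 - a) / (1 - a)

theorem hasDerivAt_gronwallPrimitive (a : ℝ) {x : ℝ} (hx : 0 < x) :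
    HasDerivAt (gronwallPrimitive a) (x ^ (-a)) x := by
  unfold gronwallPrimitive
  split_ifs with ha
  · subst ha
    simpa [Real.rpow_neg_one] using Real.hasDerivAt_log hx.ne'
  · have h1a : 1 - a ≠ 0 := sub_ne_zero.2 (Ne.symm ha)
    refine ((Real.hasDerivAt_rpow_const (p := 1 - a) (Or.inl hx.ne')).div_const
      (1 - a)).congr_deriv ?_
    rw [show 1 - a - 1 = -a by ring]
    field_simp

theorem integral_le_gronwallPrimitive_sub {a s t : ℝ} (hst : s ≤ t) {u u' g : ℝ → ℝ}
    (hu : ∀ x ∈ Icc s t, HasDerivAt u (u' x) x) (hpos : ∀ x ∈ Icc s t, 0 < u x)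
    (hg : IntegrableOn g (Icc s t)) (hineq : ∀ x ∈ Ioo s t, u x ^ a * g x ≤ u' x) :
    ∫ x in s..t, g x ≤ gronwallPrimitive a (u t) - gronwallPrimitive a (u s) := by
  have hderiv : ∀ x ∈ Icc s t,
      HasDerivAt (gronwallPrimitive a ∘ u) (u x ^ (-a) * u' x) x := fun x hx =>
    (hasDerivAt_gronwallPrimitive a (hpos x hx)).comp x (hu x hx)
  refine intervalIntegral.integral_le_sub_of_hasDeriv_right_of_le (g := gronwallPrimitive a ∘ u)
    hst (fun x hx => (hderiv x hx).continuousAt.continuousWithinAt)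
    (fun x hx => (hderiv x (Ioo_subset_Icc_self hx)).hasDerivWithinAt) hg fun x hx => ?_
  have hux := hpos x (Ioo_subset_Icc_self hx)
  calc g x = u x ^ (-a) * (u x ^ a * g x) := by
        rw [← mul_assoc, ← Real.rpow_add hux, neg_add_cancel, Real.rpow_zero, one_mul]
    _ ≤ u x ^ (-a) * u' x := by gcongr; exact hineq x hx

theorem mul_le_intervalIntegral_indicator_const {s t C τ : ℝ} {S : Set ℝ} (hst : s ≤ t)
    (hS : MeasurableSet S) (hC : 0 ≤ C) (hτ : ENNReal.ofReal τ ≤ volume (Icc s t ∩ S)) :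
    C * τ ≤ ∫ x in s..t, S.indicator (fun _ => C) x := by
  have hfin : volume (Icc s t ∩ S) ≠ ⊤ :=
    ((measure_mono inter_subset_left).trans_lt measure_Icc_lt_top).ne
  rw [intervalIntegral.integral_of_le hst, ← integral_Icc_eq_integral_Ioc,
    integral_indicator_const C hS, measureReal_restrict_apply hS, smul_eq_mul, inter_comm,
    mul_comm _ C]
  exact mul_le_mul_of_nonneg_left ((ENNReal.ofReal_le_iff_le_toReal hfin).1 hτ) hC

theorem rpow_neg_inv_sub_one_le {a x K : ℝ} (ha : 1 < a) (hx : 0 < x) (hK : x ^ (1 - a) ≤ K) :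
    K ^ (-(1 / (a - 1))) ≤ x := by
  have ha1 : 0 < a - 1 := sub_pos.2 ha
  calc K ^ (-(1 / (a - 1))) ≤ (x ^ (1 - a)) ^ (-(1 / (a - 1))) :=
        Real.rpow_le_rpow_of_nonpos (Real.rpow_pos_of_pos hx _) hK
          (neg_nonpos.2 (one_div_pos.2 ha1).le)
    _ = x := by
        rw [← Real.rpow_mul hx.le, show (1 - a) * -(1 / (a - 1)) = 1 by field_simp; ring,
          Real.rpow_one]

theorem gronwall_nondecreasing_general (T C τ a : ℝ) (hT : 0 < T) (hC : 0 < C)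
    (u u' v : ℝ → ℝ)
    (hu : ∀ t ∈ Set.Icc (0 : ℝ) T, HasDerivAt u (u' t) t)
    (hupos : ∀ t ∈ Set.Icc (0 : ℝ) T, 0 < u t)
    (hv : Measurable v) (hv0 : ∀ t ∈ Set.Icc (0 : ℝ) T, 0 ≤ v t)
    (hineq : ∀ t ∈ Set.Icc (0 : ℝ) T, u t ^ a * v t ≤ u' t)
    (hmeas : ENNReal.ofReal τ ≤ volume {t ∈ Set.Icc (0 : ℝ) T | C ≤ v t}) :
    (1 < a →
      (a - 1) * C * τ < u 0 ^ (1 - a) ∧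
      (u 0 ^ (1 - a) - (a - 1) * C * τ) ^ (-(1 / (a - 1))) ≤ u T) ∧
    (a = 1 → u 0 * Real.exp (C * τ) ≤ u T) := by
  set S := {t | C ≤ v t}
  have hS : MeasurableSet S := measurableSet_le measurable_const hv
  have hbound : ∀ t ∈ Ioo 0 T, u t ^ a * S.indicator (fun _ => C) t ≤ u' t := by
    intro t ht
    replace ht := Ioo_subset_Icc_self ht
    calc u t ^ a * S.indicator (fun _ => C) t ≤ u t ^ a * v t := by
          gcongr
          · exact Real.rpow_nonneg (hupos t ht).le a
          · exact indicator_apply_le' id fun _ => hv0 t ht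
      _ ≤ u' t := hineq t ht
  have hPhi : C * τ ≤ gronwallPrimitive a (u T) - gronwallPrimitive a (u 0) :=
    (mul_le_intervalIntegral_indicator_const hT.le hS hC.le hmeas).trans <|
      integral_le_gronwallPrimitive_sub hT.le hu hupos
        ((integrableOn_const measure_Icc_lt_top.ne).indicator hS) hbound
  have hu0 := hupos 0 (left_mem_Icc.2 hT.le)
  have huT := hupos T (right_mem_Icc.2 hT.le)
  refine ⟨fun ha1 => ?_, fun ha1 => ?_⟩
  · have h1a : (1 - a) < 0 := by linarith
    simp only [gronwallPrimitive, ha1.ne', if_false, ← sub_div,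
      le_div_iff_of_neg h1a] at hPhi
    have hK : u T ^ (1 - a) ≤ u 0 ^ (1 - a) - (a - 1) * C * τ := by linarith
    exact ⟨by linarith [Real.rpow_pos_of_pos huT (1 - a)], rpow_neg_inv_sub_one_le ha1 huT hK⟩
  · simp only [gronwallPrimitive, ha1, if_true] at hPhi
    calc u 0 * Real.exp (C * τ) = Real.exp (Real.log (u 0) + C * τ) := by
          rw [Real.exp_add, Real.exp_log hu0]
      _ ≤ Real.exp (Real.log (u T)) := Real.exp_le_exp.2 (by linarith)
      _ = u T := Real.exp_log huT

/-- Lemma F.1 (Gronwall-type lemma for non-decreasing functions): if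
`u' ≥ uᵃ v` on `[0,T]` and `v ≥ C` on a set of measure at least `τ`, then
`u(T) ≥ (u(0)^{1-a} - (a-1)Cτ)^{-1/(a-1)}` when `a > 1` (and the quantity inside is
positive), and `u(T) ≥ u(0) e^{Cτ}` when `a = 1`. -/
theorem gronwall_nondecreasing (T C τ a : ℝ) (hT : 0 < T) (hC : 0 < C) (hτ : 0 < τ)
    (ha : 1 ≤ a) (u u' v : ℝ → ℝ)
    (hu : ∀ t ∈ Set.Icc (0 : ℝ) T, HasDerivAt u (u' t) t)
    (hupos : ∀ t ∈ Set.Icc (0 : ℝ) T, 0 < u t)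
    (humono : MonotoneOn u (Set.Icc (0 : ℝ) T))
    (hv : Measurable v) (hv0 : ∀ t ∈ Set.Icc (0 : ℝ) T, 0 ≤ v t)
    (hineq : ∀ t ∈ Set.Icc (0 : ℝ) T, u t ^ a * v t ≤ u' t)
    (hmeas : ENNReal.ofReal τ ≤ volume {t ∈ Set.Icc (0 : ℝ) T | C ≤ v t}) :
    (1 < a →
      (a - 1) * C * τ < u 0 ^ (1 - a) ∧
      (u 0 ^ (1 - a) - (a - 1) * C * τ) ^ (-(1 / (a - 1))) ≤ u T) ∧
    (a = 1 → u 0 * Real.exp (C * τ) ≤ u T) :=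
  gronwall_nondecreasing_general T C τ a hT hC u u' v hu hupos hv hv0 hineq hmeas
end
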